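/- arXiv:2306.02737 — 6 statements merged into one kernel-verified Lean document; each statement's English description precedes it below -/
import Mathlib

section
/- Let f : ℝ → ℝ be a positive probability density function such that log f is strictly concave on ℝ. Then for any d > 0, the function t ↦ log(F(d - t) - F(-d - t)) is strictly concave in t, where F(x) = ∫_{-∞}^x f. -/
open Filter Real MeasureTheory

/-- Four-point inequality for strictly log-concave positive functions:
if `a, b` lie in `[p, q]`, `p + q = a + b`, and `p < a`, `p < b`, then
`f p * f q < f a * f b`. -/
lemma four_point_log_concave {f : ℝ → ℝ} (hpos : ∀ x, 0 < f x)
    (hlc : StrictConcaveOn ℝ Set.univ (fun x => Real.log (f x)))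
    {p q a b : ℝ} (hpa : p < a) (hpb : p < b)
    (haq : a ≤ q) (hbq : b ≤ q) (hsum : p + q = a + b) :
    f p * f q < f a * f b := by
  have hpq : p < q := lt_of_lt_of_le hpa haq
  have hqp : (0:ℝ) < q - p := by linarith
  set l1 : ℝ := (q - a) / (q - p) with hl1
  set l2 : ℝ := (a - p) / (q - p) with hl2
  have haq' : a < q := by linarith
  have hl1pos : 0 < l1 := div_pos (by linarith) hqp
  have hl2pos : 0 < l2 := div_pos (by linarith) hqp
  have hl12 : l1 + l2 = 1 := by
    rw [hl1, hl2, ← add_div]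
    field_simp
    ring
  have hcomb1 : l1 • p + l2 • q = a := by
    simp only [smul_eq_mul, hl1, hl2]
    field_simp
    ring
  have hcomb2 : l2 • p + l1 • q = b := by
    have hb : b = p + q - a := by linarith
    simp only [smul_eq_mul, hl1, hl2, hb]
    field_simp
    ring
  have H1 := hlc.2 (Set.mem_univ p) (Set.mem_univ q) hpq.ne hl1pos hl2pos hl12
  have H2 := hlc.2 (Set.mem_univ p) (Set.mem_univ q) hpq.ne hl2pos hl1pos
    (by linarith : l2 + l1 = 1)
  rw [hcomb1] at H1
  rw [hcomb2] at H2
  have hsumlog : Real.log (f p) + Real.log (f q) < Real.log (f a) + Real.log (f b) := by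
    have H := add_lt_add H1 H2
    simp only [smul_eq_mul] at H
    have hlin : l1 * Real.log (f p) + l2 * Real.log (f q)
        + (l2 * Real.log (f p) + l1 * Real.log (f q))
        = Real.log (f p) + Real.log (f q) := by
      have h12 : l2 = 1 - l1 := by linarith
      rw [h12]; ring
    linarith [H, hlin.symm.le]
  have h1 : Real.log (f p * f q) < Real.log (f a * f b) := by
    rw [Real.log_mul (hpos p).ne' (hpos q).ne', Real.log_mul (hpos a).ne' (hpos b).ne']
    exact hsumlog
  exact (Real.log_lt_log_iff (mul_pos (hpos p) (hpos q)) (mul_pos (hpos a) (hpos b))).mp h1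

theorem strictConcaveOn_log_interval_prob
    (f : ℝ → ℝ) (hcont : Continuous f) (hpos : ∀ x, 0 < f x)
    (hint : ∫ x, f x = 1)
    (hlc : StrictConcaveOn ℝ Set.univ (fun x => Real.log (f x)))
    (F : ℝ → ℝ) (hF : ∀ x, F x = ∫ y in Set.Iic x, f y)
    (d : ℝ) (hd : 0 < d) :
    StrictConcaveOn ℝ Set.univ
      (fun t : ℝ => Real.log (F (d - t) - F (-d - t))) := by
  -- f is integrable
  have hfi : Integrable f := by
    by_contra h
    rw [integral_undef h] at hint
    norm_num at hint
  set h : ℝ → ℝ := fun t => ∫ x in (-d - t)..(d - t), f x with hhdef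
  have hFh : ∀ t, F (d - t) - F (-d - t) = h t := by
    intro t
    rw [hF, hF]
    exact intervalIntegral.integral_Iic_sub_Iic hfi.integrableOn hfi.integrableOn
  have hhpos : ∀ t, 0 < h t :=
    fun t => intervalIntegral.intervalIntegral_pos_of_pos
      hfi.intervalIntegrable hpos (by linarith)
  -- derivative of h
  have hG : ∀ y : ℝ, HasDerivAt (fun u => ∫ x in (0:ℝ)..u, f x) (f y) y := fun y =>
    intervalIntegral.integral_hasDerivAt_right hfi.intervalIntegrable
      (hcont.stronglyMeasurable.stronglyMeasurableAtFilter) hcont.continuousAt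
  have hsplit : h = fun t => (∫ x in (0:ℝ)..(d - t), f x) - ∫ x in (0:ℝ)..(-d - t), f x := by
    funext t
    rw [hhdef]
    rw [intervalIntegral.integral_interval_sub_left hfi.intervalIntegrable
      hfi.intervalIntegrable]
  have hderiv : ∀ t : ℝ, HasDerivAt h (f (-d - t) - f (d - t)) t := by
    intro t
    have h1 : HasDerivAt (fun t : ℝ => d - t) (-1) t := by
      simpa using (hasDerivAt_id t).const_sub d
    have h2 : HasDerivAt (fun t : ℝ => -d - t) (-1) t := by
      simpa using (hasDerivAt_id t).const_sub (-d)
    have H1 := HasDerivAt.comp t (hG (d - t)) h1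
    have H2 := HasDerivAt.comp t (hG (-d - t)) h2
    rw [hsplit]
    refine (H1.sub H2).congr_deriv ?_
    ring
  have hhcont : Continuous h := by
    have : Differentiable ℝ h := fun t => (hderiv t).differentiableAt
    exact this.continuous
  -- change of variables
  have hsub : ∀ t, h t = ∫ x in (-d)..d, f (x - t) := by
    intro t
    rw [intervalIntegral.integral_comp_sub_right (fun x => f x) t, hhdef]
  -- the log
  set g : ℝ → ℝ := fun t => Real.log (h t) with hgdef
  have hgderiv : ∀ t : ℝ, HasDerivAt g ((f (-d - t) - f (d - t)) / h t) t := by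
    intro t
    exact (hderiv t).log (hhpos t).ne'
  have hganti : StrictAnti (deriv g) := by
    intro s t hst
    rw [(hgderiv s).deriv, (hgderiv t).deriv]
    rw [div_lt_div_iff₀ (hhpos t) (hhpos s)]
    -- ⊢ (f (-d - t) - f (d - t)) * h s < (f (-d - s) - f (d - s)) * h t
    rw [sub_pos.symm]
    have hint1 : IntervalIntegrable (fun x => (f (-d - s) - f (d - s)) * f (x - t)
        - (f (-d - t) - f (d - t)) * f (x - s)) volume (-d) d := by
      apply Continuous.intervalIntegrable
      continuity
    have hkey : ∀ x ∈ Set.Ioo (-d) d,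
        0 < (f (-d - s) - f (d - s)) * f (x - t) - (f (-d - t) - f (d - t)) * f (x - s) := by
      intro x hx
      obtain ⟨hx1, hx2⟩ := hx
      have key1 : f (-d - t) * f (x - s) < f (-d - s) * f (x - t) := by
        apply four_point_log_concave hpos hlc
        · linarith
        · linarith
        · linarith
        · linarith
        · ring
      have key2 : f (x - t) * f (d - s) < f (d - t) * f (x - s) := by
        apply four_point_log_concave hpos hlc
        · linarith
        · linarith
        · linarith
        · linarith
        · ring
      nlinarith [key1, key2]
    have hpos' : 0 < ∫ x in (-d)..d, ((f (-d - s) - f (d - s)) * f (x - t)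
        - (f (-d - t) - f (d - t)) * f (x - s)) :=
      intervalIntegral.intervalIntegral_pos_of_pos_on hint1 hkey (by linarith)
    have hsplit2 : (∫ x in (-d)..d, ((f (-d - s) - f (d - s)) * f (x - t)
        - (f (-d - t) - f (d - t)) * f (x - s)))
        = (f (-d - s) - f (d - s)) * h t - (f (-d - t) - f (d - t)) * h s := by
      rw [intervalIntegral.integral_sub, intervalIntegral.integral_const_mul,
        intervalIntegral.integral_const_mul, ← hsub, ← hsub]
      · apply Continuous.intervalIntegrable; continuity
      · apply Continuous.intervalIntegrable; continuity
    rw [hsplit2] at hpos'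
    exact hpos'
  have heq : (fun t : ℝ => Real.log (F (d - t) - F (-d - t))) = g := by
    funext t
    rw [hgdef]
    simp only [hFh t]
  rw [heq]
  exact StrictAnti.strictConcaveOn_univ_of_deriv
    (hhcont.log (fun t => (hhpos t).ne')) hganti
end

section
/- Let f : ℝ → ℝ be a positive probability density function with log f strictly concave, and F its cumulative distribution function. Then the function x ↦ log(1 - F(x)) is strictly concave on ℝ. -/
open Filter Real MeasureTheory

/-- Four-point inequality from strict concavity: if `a < b ≤ c < d` (in the weak sense
that `b, c` lie strictly between `a` and `d`) and `a + d = b + c`, then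
`g a + g d < g b + g c`. -/
lemma four_point_strictConcave {g : ℝ → ℝ} (hg : StrictConcaveOn ℝ Set.univ g)
    {a b c d : ℝ} (hab : a < b) (hbd : b < d) (hac : a < c) (hcd : c < d)
    (h : a + d = b + c) : g a + g d < g b + g c := by
  have had : a < d := hab.trans hbd
  have hda : (0:ℝ) < d - a := by linarith
  have hne : a ≠ d := ne_of_lt had
  have h1 : ((d - b) / (d - a)) • a + ((b - a) / (d - a)) • d = b := by
    simp only [smul_eq_mul]; field_simp; ring
  have h2 : ((d - c) / (d - a)) • a + ((c - a) / (d - a)) • d = c := by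
    simp only [smul_eq_mul]; field_simp; ring
  have hb' := hg.2 (Set.mem_univ a) (Set.mem_univ d) hne
      (div_pos (by linarith) hda : (0:ℝ) < (d - b) / (d - a))
      (div_pos (by linarith) hda : (0:ℝ) < (b - a) / (d - a))
      (by field_simp; ring)
  have hc' := hg.2 (Set.mem_univ a) (Set.mem_univ d) hne
      (div_pos (by linarith) hda : (0:ℝ) < (d - c) / (d - a))
      (div_pos (by linarith) hda : (0:ℝ) < (c - a) / (d - a))
      (by field_simp; ring)
  rw [h1] at hb'
  rw [h2] at hc'
  simp only [smul_eq_mul] at hb' hc'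
  have hsum : ((d - b) / (d - a)) + ((d - c) / (d - a)) = 1 := by
    field_simp; linarith
  have hsum2 : ((b - a) / (d - a)) + ((c - a) / (d - a)) = 1 := by
    field_simp; linarith
  have hlt := add_lt_add hb' hc'
  have heq : g a + g d = (d - b) / (d - a) * g a + (b - a) / (d - a) * g d
      + ((d - c) / (d - a) * g a + (c - a) / (d - a) * g d) := by
    linear_combination g a * hsum.symm + g d * hsum2.symm
  linarith [hlt, heq.ge, heq.le]

theorem strictConcaveOn_log_survival
    (f : ℝ → ℝ) (hcont : Continuous f) (hpos : ∀ x, 0 < f x)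
    (hint : ∫ x, f x = 1)
    (hlc : StrictConcaveOn ℝ Set.univ (fun x => Real.log (f x)))
    (F : ℝ → ℝ) (hF : ∀ x, F x = ∫ y in Set.Iic x, f y) :
    StrictConcaveOn ℝ Set.univ (fun x : ℝ => Real.log (1 - F x)) := by
  -- f is integrable
  have hInt : Integrable f := by
    by_contra h
    rw [integral_undef h] at hint
    norm_num at hint
  -- survival function
  set S : ℝ → ℝ := fun x => ∫ t in Set.Ioi x, f t with hSdef
  have hS_eq : ∀ x, 1 - F x = S x := by
    intro x
    have := integral_add_compl (measurableSet_Iic (a := x)) hInt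
    rw [hint] at this
    have hcompl : (Set.Iic x)ᶜ = Set.Ioi x := Set.compl_Iic
    rw [hcompl] at this
    rw [hF x, hSdef]
    linarith [this]
  -- S is positive
  have hS_pos : ∀ x, 0 < S x := by
    intro x
    rw [hSdef]
    have hne : volume (Function.support f ∩ Set.Ioi x) ≠ 0 := by
      have : Function.support f ∩ Set.Ioi x = Set.Ioi x := by
        apply Set.inter_eq_right.mpr
        intro t _
        exact (hpos t).ne'
      rw [this]
      simp [Real.volume_Ioi]
    have := (setIntegral_pos_iff_support_of_nonneg_ae
      (Filter.Eventually.of_forall (fun t => (hpos t).le) : 0 ≤ᵐ[volume.restrict (Set.Ioi x)] f)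
      hInt.integrableOn).mpr (pos_iff_ne_zero.mpr hne)
    exact this
  -- F has derivative f x at every x
  have hF_deriv : ∀ x, HasDerivAt F (f x) x := by
    intro x
    have key : ∀ y, F y = F 0 + ∫ t in (0:ℝ)..y, f t := by
      intro y
      rw [hF y, hF 0]
      have := intervalIntegral.integral_Iic_sub_Iic (μ := volume) (f := f)
        hInt.integrableOn hInt.integrableOn (a := 0) (b := y)
      linarith [this]
    have hd : HasDerivAt (fun y => F 0 + ∫ t in (0:ℝ)..y, f t) (f x) x := by
      apply HasDerivAt.const_add
      exact intervalIntegral.integral_hasDerivAt_right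
        (hInt.intervalIntegrable) (hcont.stronglyMeasurableAtFilter _ _)
        hcont.continuousAt
    exact hd.congr_of_eventuallyEq (Filter.Eventually.of_forall key)
  -- derivative of the log-survival function
  have hL_deriv : ∀ x, HasDerivAt (fun y => Real.log (1 - F y)) (-(f x) / S x) x := by
    intro x
    have h1 : HasDerivAt (fun y => 1 - F y) (-(f x)) x := by
      simpa using (hF_deriv x).const_sub 1
    have h2 : (1 - F x) ≠ 0 := by rw [hS_eq x]; exact (hS_pos x).ne'
    have := h1.log h2
    rw [hS_eq x] at this
    exact this
  -- key inequality: hazard rate is strictly increasing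
  have hKey : ∀ x y : ℝ, x < y → f x * S y < f y * S x := by
    intro x y hxy
    set c : ℝ := y - x with hc
    have hc0 : 0 < c := by simp [hc]; linarith
    -- translate the integral for S y
    have htrans : S y = ∫ t in Set.Ioi x, f (t + c) := by
      show (∫ t in Set.Ioi y, f t) = _
      rw [← integral_indicator measurableSet_Ioi, ← integral_indicator measurableSet_Ioi]
      rw [← integral_add_right_eq_self (fun t => (Set.Ioi y).indicator f t) c]
      congr 1
      funext t
      by_cases ht : t ∈ Set.Ioi x
      · rw [Set.indicator_of_mem ht, Set.indicator_of_mem]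
        simp only [Set.mem_Ioi] at ht ⊢
        linarith
      · rw [Set.indicator_of_notMem ht, Set.indicator_of_notMem]
        simp only [Set.mem_Ioi] at ht ⊢
        intro h; exact ht (by linarith)
    -- integrability facts
    have hInt1 : IntegrableOn (fun t => f y * f t) (Set.Ioi x) :=
      (hInt.const_mul (f y)).integrableOn
    have hInt2 : IntegrableOn (fun t => f x * f (t + c)) (Set.Ioi x) := by
      have : Integrable (fun t => f (t + c)) := hInt.comp_add_right c
      exact (this.const_mul (f x)).integrableOn
    -- pointwise strict inequality on Ioi x
    have hpt : ∀ t ∈ Set.Ioi x, f x * f (t + c) < f y * f t := by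
      intro t ht
      simp only [Set.mem_Ioi] at ht
      have hfp := four_point_strictConcave hlc (a := x) (b := y) (c := t) (d := t + c)
        hxy (by simp [hc]; linarith) ht (by simp [hc]; linarith) (by simp [hc]; ring)
      have e1 : Real.log (f x) + Real.log (f (t + c)) < Real.log (f y) + Real.log (f t) := hfp
      have := Real.exp_lt_exp.mpr e1
      rwa [Real.exp_add, Real.exp_add, Real.exp_log (hpos _), Real.exp_log (hpos _),
        Real.exp_log (hpos _), Real.exp_log (hpos _)] at this
    -- integrate
    have hdiffpos : 0 < ∫ t in Set.Ioi x, (f y * f t - f x * f (t + c)) := by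
      have hnn : 0 ≤ᵐ[volume.restrict (Set.Ioi x)]
          fun t => f y * f t - f x * f (t + c) := by
        filter_upwards [ae_restrict_mem measurableSet_Ioi] with t ht
        simp only [Pi.zero_apply]
        linarith [hpt t ht]
      have hint' : IntegrableOn (fun t => f y * f t - f x * f (t + c)) (Set.Ioi x) :=
        hInt1.sub hInt2
      rw [setIntegral_pos_iff_support_of_nonneg_ae hnn hint']
      have : Function.support (fun t => f y * f t - f x * f (t + c)) ∩ Set.Ioi x
          = Set.Ioi x := by
        apply Set.inter_eq_right.mpr
        intro t ht
        exact Function.mem_support.mpr (ne_of_gt (sub_pos.mpr (hpt t ht)))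
      rw [this]
      simp [Real.volume_Ioi]
    have hsub : (∫ t in Set.Ioi x, (f y * f t - f x * f (t + c)))
        = (∫ t in Set.Ioi x, f y * f t) - ∫ t in Set.Ioi x, f x * f (t + c) :=
      integral_sub hInt1 hInt2
    have e2 : (∫ t in Set.Ioi x, f y * f t) = f y * S x := by
      rw [hSdef, integral_const_mul]
    have e3 : (∫ t in Set.Ioi x, f x * f (t + c)) = f x * S y := by
      rw [htrans, integral_const_mul]
    rw [hsub, e2, e3] at hdiffpos
    linarith
  -- conclude via strict antitonicity of the derivative
  have hanti : StrictAntiOn (deriv fun x => Real.log (1 - F x)) (interior Set.univ) := by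
    intro x _ y _ hxy
    rw [(hL_deriv x).deriv, (hL_deriv y).deriv]
    rw [div_lt_div_iff₀ (hS_pos y) (hS_pos x)]
    have := hKey x y hxy
    nlinarith [hS_pos x, hS_pos y]
  exact hanti.strictConcaveOn_of_deriv convex_univ
    (fun x _ => ((hL_deriv x).continuousAt).continuousWithinAt)
end

section
/- Let f : ℝ → ℝ be a positive probability density function with log f strictly concave, and F its cumulative distribution function. Then the function x ↦ log(F(x)) is strictly concave on ℝ. -/
open Filter Real MeasureTheory

theorem strictConcaveOn_log_cdf
    (f : ℝ → ℝ) (hcont : Continuous f) (hpos : ∀ x, 0 < f x)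
    (hint : ∫ x, f x = 1)
    (hlc : StrictConcaveOn ℝ Set.univ (fun x => Real.log (f x)))
    (F : ℝ → ℝ) (hF : ∀ x, F x = ∫ y in Set.Iic x, f y) :
    StrictConcaveOn ℝ Set.univ (fun x : ℝ => Real.log (F x)) := by
  have hInt : Integrable f := by
    by_contra h
    rw [integral_undef h] at hint
    norm_num at hint
  -- F is positive
  have hsupp : Function.support f = Set.univ := by
    ext u; simp [Function.support, (hpos u).ne']
  have hFpos : ∀ x, 0 < F x := by
    intro x
    rw [hF x]
    rw [setIntegral_pos_iff_support_of_nonneg_ae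
      (Filter.Eventually.of_forall fun u => (hpos u).le) hInt.integrableOn]
    rw [hsupp, Set.univ_inter, Real.volume_Iic]
    exact ENNReal.zero_lt_top
  -- F y = F x + ∫ x..y f
  have key : ∀ x y : ℝ, x ≤ y → F y = F x + ∫ t in x..y, f t := by
    intro x y hxy
    rw [intervalIntegral.integral_of_le hxy, hF x, hF y,
      ← Set.Iic_union_Ioc_eq_Iic hxy,
      setIntegral_union (Set.Iic_disjoint_Ioc le_rfl) measurableSet_Ioc
        hInt.integrableOn hInt.integrableOn]
  have key' : ∀ y : ℝ, F y = F 0 + ∫ t in (0:ℝ)..y, f t := by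
    intro y
    rcases le_total (0:ℝ) y with h | h
    · exact key 0 y h
    · have := key y 0 h
      rw [intervalIntegral.integral_symm] at this
      linarith
  -- derivative of F
  have hFd : ∀ x, HasDerivAt F (f x) x := by
    intro x
    have h1 : HasDerivAt (fun y => ∫ t in (0:ℝ)..y, f t) (f x) x :=
      intervalIntegral.integral_hasDerivAt_right hInt.intervalIntegrable
        (hcont.stronglyMeasurable.stronglyMeasurableAtFilter) hcont.continuousAt
    have h2 := h1.const_add (F 0)
    have : F = fun y => F 0 + ∫ t in (0:ℝ)..y, f t := funext key'
    rw [this]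
    exact h2
  have hld : ∀ x, HasDerivAt (fun y => Real.log (F y)) (f x / F x) x :=
    fun x => (hFd x).log (hFpos x).ne'
  -- key inequality
  have keyineq : ∀ x y : ℝ, x < y → f y * F x < f x * F y := by
    intro x y hxy
    set c := y - x with hc
    have hcpos : 0 < c := by simp [hc]; linarith
    -- translation
    have htrans : ∫ u in Set.Iic x, f (u + c) = ∫ v in Set.Iic y, f v := by
      have hemb : MeasurableEmbedding (fun u : ℝ => u + c) :=
        (MeasurableEquiv.addRight c).measurableEmbedding
      have := (measurePreserving_add_right volume c).setIntegral_preimage_emb hemb f (Set.Iic y)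
      rw [show (fun u : ℝ => u + c) ⁻¹' Set.Iic y = Set.Iic x by
        ext u; simp only [Set.mem_preimage, Set.mem_Iic]; rw [hc]
        constructor <;> intro h <;> linarith] at this
      exact this
    -- pointwise strict inequality on Iio x, equality at x
    have pt : ∀ u : ℝ, u < x → f u * f y < f x * f (u + c) := by
      intro u hu
      have hne : u ≠ y := by linarith
      set a := (y - x) / (y - u) with ha
      have hyu : 0 < y - u := by linarith
      have ha0 : 0 < a := div_pos (by linarith) hyu
      have ha1 : a < 1 := (div_lt_one hyu).2 (by linarith)
      have hb0 : 0 < 1 - a := by linarith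
      have hsum : a + (1 - a) = 1 := by ring
      have hsum' : (1 - a) + a = 1 := by ring
      have h1 := hlc.2 (Set.mem_univ u) (Set.mem_univ y) hne ha0 hb0 hsum
      have h2 := hlc.2 (Set.mem_univ u) (Set.mem_univ y) hne hb0 ha0 hsum'
      have hax : a • u + (1 - a) • y = x := by
        simp only [smul_eq_mul]
        rw [ha]
        field_simp [hyu.ne']
        ring
      have hbx : (1 - a) • u + a • y = u + c := by
        simp only [smul_eq_mul]
        rw [ha, hc]
        field_simp [hyu.ne']
        ring
      rw [hax] at h1
      rw [hbx] at h2
      have hlog : Real.log (f u) + Real.log (f y) < Real.log (f x) + Real.log (f (u + c)) := by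
        have := add_lt_add h1 h2
        simp only [smul_eq_mul] at this ⊢
        nlinarith [this]
      rw [← Real.log_mul (hpos u).ne' (hpos y).ne',
        ← Real.log_mul (hpos x).ne' (hpos (u + c)).ne'] at hlog
      exact (Real.log_lt_log_iff (mul_pos (hpos u) (hpos y))
        (mul_pos (hpos x) (hpos (u + c)))).1 hlog
    -- integrate
    have hIntc : Integrable (fun u : ℝ => f (u + c)) := hInt.comp_add_right c
    set g : ℝ → ℝ := fun u => f x * f (u + c) - f y * f u with hg
    have hgint : IntegrableOn g (Set.Iic x) :=
      ((hIntc.const_mul (f x)).sub (hInt.const_mul (f y))).integrableOn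
    have hgnonneg : 0 ≤ᵐ[volume.restrict (Set.Iic x)] g := by
      filter_upwards [ae_restrict_mem measurableSet_Iic] with u hu
      rcases lt_or_eq_of_le (Set.mem_Iic.1 hu) with h | h
      · simp only [hg, Pi.zero_apply, sub_nonneg]
        nlinarith [pt u h]
      · simp only [hg, h, Pi.zero_apply, sub_nonneg]
        have : x + c = y := by simp [hc]
        rw [this]
        nlinarith [hpos y, hpos x]
    have hgpos : 0 < ∫ u in Set.Iic x, g u := by
      rw [setIntegral_pos_iff_support_of_nonneg_ae hgnonneg hgint]
      have hsub : Set.Iio x ⊆ Function.support g ∩ Set.Iic x := by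
        intro u hu
        refine ⟨?_, Set.mem_Iic.2 (Set.mem_Iio.1 hu).le⟩
        simp only [Function.mem_support, hg]
        have := pt u hu
        intro hz
        nlinarith [hz]
      refine lt_of_lt_of_le ?_ (measure_mono hsub)
      rw [Real.volume_Iio]
      exact ENNReal.zero_lt_top
    have hsplit : ∫ u in Set.Iic x, g u
        = f x * (∫ u in Set.Iic x, f (u + c)) - f y * ∫ u in Set.Iic x, f u := by
      rw [hg]
      rw [integral_sub ((hIntc.const_mul (f x)).integrableOn)
        ((hInt.const_mul (f y)).integrableOn), integral_const_mul, integral_const_mul]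
    rw [hsplit, htrans, ← hF x, ← hF y] at hgpos
    linarith
  -- strict antitone derivative
  have hanti : StrictAnti (deriv fun y => Real.log (F y)) := by
    intro x y hxy
    rw [(hld x).deriv, (hld y).deriv]
    rw [div_lt_div_iff₀ (hFpos y) (hFpos x)]
    exact keyineq x y hxy
  have hFcont : Continuous F := by
    have : Continuous fun y => F 0 + ∫ t in (0:ℝ)..y, f t :=
      continuous_const.add (intervalIntegral.continuous_primitive
        (fun a b => hInt.intervalIntegrable) 0)
    rw [funext key']
    exact this
  have hlogFcont : Continuous fun y => Real.log (F y) :=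
    Real.continuousOn_log.comp_continuous hFcont fun x => (hFpos x).ne'
  exact hanti.strictConcaveOn_univ_of_deriv hlogFcont
end

section
/- Let A : Fin n → Fin n → Fin 3 → ℕ be paired-comparison data with A i j k = A j i (2 - k) (symmetry). Define Davidson's conditions: DC1: there exist i₁, j₁ with A i₁ j₁ 1 > 0 (an 'equal' judgment, using index 1 for ties); DC2: for every nonempty proper subset S of Fin n there exist i₂, i₃ ∈ S and j₂, j₃ ∉ S with A i₂ j₂ 2 > 0 and A i₃ j₃ 0 > 0. Define the SC conditions with the directed graph DG where i → j iff A i j 2 > 0: SC1 = DC1; SC2: DG contains a directed cycle; SC3: for every nonempty proper subset S of Fin n, either there exist i₂, i₃ ∈ S, j₂, j₃ ∉ S with A i₂ j₂ 2 > 0 and A i₃ j₃ 0 > 0, or there exist i₄ ∈ S, j₄ ∉ S with A i₄ j₄ 1 > 0. Then DC1 and DC2 together imply SC1, SC2 and SC3. -/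
/-! Davidson's condition DC2, applied to singletons, gives every object an out-arc in the
"better than" digraph; a finite digraph in which every vertex has an out-arc contains a
directed cycle. SC1 is DC1, and SC3 is the first alternative of DC2. -/

namespace Relation

theorem exists_transGen_self_of_forall_exists {α : Type*} [Finite α] [Nonempty α]
    {r : α → α → Prop} (h : ∀ a, ∃ b, r a b) : ∃ a, TransGen r a a := by
  -- Without a cycle, reversed reachability is a strict order on a finite type; a minimal
  -- element of it would be a sink.
  by_contra! hacyclic
  have : IsTrans α (Function.swap (TransGen r)) := ⟨fun _ _ _ hab hbc => hbc.trans hab⟩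
  have : Std.Irrefl (Function.swap (TransGen r)) := ⟨hacyclic⟩
  obtain ⟨a, -, ha⟩ := (Finite.wellFounded_of_trans_of_irrefl (Function.swap (TransGen r))).has_min
    Set.univ Set.univ_nonempty
  obtain ⟨b, hab⟩ := h a
  exact ha b trivial (TransGen.single hab)

end Relation

theorem Finset.forall_exists_of_forall_exists_mem_not_mem {α : Type*} [Fintype α]
    [DecidableEq α] [Nontrivial α] {r : α → α → Prop}
    (h : ∀ S : Finset α, S.Nonempty → S ≠ Finset.univ → ∃ i ∈ S, ∃ j ∉ S, r i j) (i : α) :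
    ∃ j, r i j := by
  obtain ⟨i', hi', j, -, hij⟩ := h {i} (Finset.singleton_nonempty i) (Finset.singleton_ne_univ i)
  exact ⟨j, Finset.mem_singleton.mp hi' ▸ hij⟩

theorem DC_implies_SC_general
    (n : ℕ) (hn : 2 ≤ n) (A : Fin n → Fin n → Fin 3 → ℕ)
    (hDC1 : ∃ i₁ j₁, 0 < A i₁ j₁ 1)
    (hDC2 : ∀ S : Finset (Fin n), S.Nonempty → S ≠ Finset.univ →
      (∃ i₂ ∈ S, ∃ j₂ ∉ S, 0 < A i₂ j₂ 2) ∧ (∃ i₃ ∈ S, ∃ j₃ ∉ S, 0 < A i₃ j₃ 0)) :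
    (∃ i₁ j₁, 0 < A i₁ j₁ 1) ∧
    (∃ v : Fin n, Relation.TransGen (fun i j => 0 < A i j 2) v v) ∧
    (∀ S : Finset (Fin n), S.Nonempty → S ≠ Finset.univ →
      ((∃ i₂ ∈ S, ∃ j₂ ∉ S, 0 < A i₂ j₂ 2) ∧ (∃ i₃ ∈ S, ∃ j₃ ∉ S, 0 < A i₃ j₃ 0)) ∨
      (∃ i₄ ∈ S, ∃ j₄ ∉ S, 0 < A i₄ j₄ 1)) := by
  have := Fin.nontrivial_iff_two_le.mpr hn
  have hout : ∀ i, ∃ j, 0 < A i j 2 :=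
    Finset.forall_exists_of_forall_exists_mem_not_mem fun S hS hSU => (hDC2 S hS hSU).1
  exact ⟨hDC1, Relation.exists_transGen_self_of_forall_exists hout,
    fun S hS hSU => Or.inl (hDC2 S hS hSU)⟩

theorem DC_implies_SC
    (n : ℕ) (hn : 2 ≤ n) (A : Fin n → Fin n → Fin 3 → ℕ)
    (hsym : ∀ i j k, A i j k = A j i (2 - k))
    (hdiag : ∀ i k, A i i k = 0)
    (hDC1 : ∃ i₁ j₁, 0 < A i₁ j₁ 1)
    (hDC2 : ∀ S : Finset (Fin n), S.Nonempty → S ≠ Finset.univ →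
      (∃ i₂ ∈ S, ∃ j₂ ∉ S, 0 < A i₂ j₂ 2) ∧ (∃ i₃ ∈ S, ∃ j₃ ∉ S, 0 < A i₃ j₃ 0)) :
    (∃ i₁ j₁, 0 < A i₁ j₁ 1) ∧
    (∃ v : Fin n, Relation.TransGen (fun i j => 0 < A i j 2) v v) ∧
    (∀ S : Finset (Fin n), S.Nonempty → S ≠ Finset.univ →
      ((∃ i₂ ∈ S, ∃ j₂ ∉ S, 0 < A i₂ j₂ 2) ∧ (∃ i₃ ∈ S, ∃ j₃ ∉ S, 0 < A i₃ j₃ 0)) ∨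
      (∃ i₄ ∈ S, ∃ j₄ ∉ S, 0 < A i₄ j₄ 1)) :=
  DC_implies_SC_general n hn A hDC1 hDC2
end

section
/- Let A : Fin n → Fin n → Fin 3 → ℕ be paired-comparison data with symmetry A i j k = A j i (2 - k). Define the undirected graph G_M with an edge between i and j iff A i j 1 > 0 or (A i j 0 > 0 and A i j 2 > 0). Define SC3: for every nonempty proper subset S of Fin n, either there are i₂, i₃ ∈ S, j₂, j₃ ∉ S with A i₂ j₂ 2 > 0 and A i₃ j₃ 0 > 0, or there are i₄ ∈ S, j₄ ∉ S with A i₄ j₄ 1 > 0. Then connectedness of G_M implies SC3. -/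
theorem Relation.ReflTransGen.exists_rel_mem_notMem {α : Type*} {r : α → α → Prop} {s : Set α}
    {x y : α} (h : Relation.ReflTransGen r x y) (hx : x ∈ s) (hy : y ∉ s) :
    ∃ a ∈ s, ∃ b ∉ s, r a b := by
  induction h with
  | refl => exact absurd hx hy
  | @tail b c _ hbc ih =>
    by_cases hb : b ∈ s
    · exact ⟨b, hb, c, hy, hbc⟩
    · exact ih hb

theorem MC3_implies_SC3_general
    (n : ℕ) (A : Fin n → Fin n → Fin 3 → ℕ)
    (hMC3 : ∀ i j : Fin n,
      Relation.ReflTransGen (fun a b => 0 < A a b 1 ∨ (0 < A a b 0 ∧ 0 < A a b 2)) i j) :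
    ∀ S : Finset (Fin n), S.Nonempty → S ≠ Finset.univ →
      ((∃ i₂ ∈ S, ∃ j₂ ∉ S, 0 < A i₂ j₂ 2) ∧ (∃ i₃ ∈ S, ∃ j₃ ∉ S, 0 < A i₃ j₃ 0)) ∨
      (∃ i₄ ∈ S, ∃ j₄ ∉ S, 0 < A i₄ j₄ 1) := by
  intro S ⟨x, hx⟩ hS
  obtain ⟨y, hy⟩ : ∃ y, y ∉ S := by simpa [Finset.eq_univ_iff_forall] using hS
  obtain ⟨a, ha, b, hb, hab⟩ :=
    (hMC3 x y).exists_rel_mem_notMem (s := (S : Set (Fin n))) hx hy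
  rcases hab with hequal | ⟨hworse, hbetter⟩
  · exact Or.inr ⟨a, ha, b, hb, hequal⟩
  · exact Or.inl ⟨⟨a, ha, b, hb, hbetter⟩, ⟨a, ha, b, hb, hworse⟩⟩

theorem MC3_implies_SC3
    (n : ℕ) (hn : 2 ≤ n) (A : Fin n → Fin n → Fin 3 → ℕ)
    (hsym : ∀ i j k, A i j k = A j i (2 - k))
    (hdiag : ∀ i k, A i i k = 0)
    (hMC3 : ∀ i j : Fin n,
      Relation.ReflTransGen (fun a b => 0 < A a b 1 ∨ (0 < A a b 0 ∧ 0 < A a b 2)) i j) :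
    ∀ S : Finset (Fin n), S.Nonempty → S ≠ Finset.univ →
      ((∃ i₂ ∈ S, ∃ j₂ ∉ S, 0 < A i₂ j₂ 2) ∧ (∃ i₃ ∈ S, ∃ j₃ ∉ S, 0 < A i₃ j₃ 0)) ∨
      (∃ i₄ ∈ S, ∃ j₄ ∉ S, 0 < A i₄ j₄ 1) :=
  MC3_implies_SC3_general n A hMC3
end

section
/- Let f be a positive probability density function on ℝ, symmetric about 0, with log f strictly concave, and let F be its cumulative distribution function. Consider two objects with parameters m₁ = 0 and m₂ ∈ ℝ, data consisting of one judgment '1 better than 2' and one judgment '2 better than 1', and log-likelihood ℓ(m₂) = log(1 - F(-m₂)) + log(1 - F(m₂)) (the two-option model with threshold 0). Then ℓ is strictly concave, tends to -∞ as m₂ → ±∞, and attains its unique maximum at m₂ = 0. -/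
open Filter Real MeasureTheory Topology

/-- Four-point inequality from strict log-concavity: for `u < x` and `δ > 0`,
`f u * f (x + δ) < f (u + δ) * f x`. -/
lemma fourpoint_of_strict_logconcave {f : ℝ → ℝ} (hpos : ∀ x, 0 < f x)
    (hlc : StrictConcaveOn ℝ Set.univ (fun x => Real.log (f x)))
    {u x δ : ℝ} (hux : u < x) (hδ : 0 < δ) :
    f u * f (x + δ) < f (u + δ) * f x := by
  set D : ℝ := x + δ - u with hDdef
  have hD : 0 < D := by simp only [hDdef]; linarith
  set lam : ℝ := (x - u) / D with hlamdef
  have hlam0 : 0 < lam := div_pos (by linarith) hD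
  have h1m : 1 - lam = δ / D := by
    rw [hlamdef, eq_div_iff hD.ne', sub_mul, div_mul_cancel₀ _ hD.ne', hDdef]
    ring
  have h1m0 : 0 < 1 - lam := by rw [h1m]; positivity
  have hne : u ≠ x + δ := by intro h; linarith
  have e1 : lam • u + (1 - lam) • (x + δ) = u + δ := by
    simp only [smul_eq_mul, hlamdef]
    field_simp
    ring
  have e2 : (1 - lam) • u + lam • (x + δ) = x := by
    simp only [smul_eq_mul, hlamdef]
    field_simp
    ring
  have A := hlc.2 (Set.mem_univ u) (Set.mem_univ (x + δ)) hne hlam0 h1m0 (by ring)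
  have B := hlc.2 (Set.mem_univ u) (Set.mem_univ (x + δ)) hne h1m0 hlam0 (by ring)
  rw [e1] at A
  rw [e2] at B
  simp only [smul_eq_mul] at A B
  have hsum : lam * Real.log (f u) + (1 - lam) * Real.log (f (x + δ)) +
      ((1 - lam) * Real.log (f u) + lam * Real.log (f (x + δ)))
      = Real.log (f u) + Real.log (f (x + δ)) := by ring
  have hlog : Real.log (f u) + Real.log (f (x + δ))
      < Real.log (f (u + δ)) + Real.log (f x) := by linarith
  have h1 : Real.log (f u * f (x + δ)) < Real.log (f (u + δ) * f x) := by
    rw [Real.log_mul (hpos u).ne' (hpos (x + δ)).ne',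
      Real.log_mul (hpos (u + δ)).ne' (hpos x).ne']
    exact hlog
  exact (Real.log_lt_log_iff (mul_pos (hpos u) (hpos (x + δ)))
    (mul_pos (hpos (u + δ)) (hpos x))).1 h1

theorem two_option_mutual_wins_unique_MLE
    (f : ℝ → ℝ) (hcont : Continuous f) (hpos : ∀ x, 0 < f x)
    (hsymm : ∀ x, f (-x) = f x) (hint : ∫ x, f x = 1)
    (hlc : StrictConcaveOn ℝ Set.univ (fun x => Real.log (f x)))
    (F : ℝ → ℝ) (hF : ∀ x, F x = ∫ y in Set.Iic x, f y)
    (ℓ : ℝ → ℝ)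
    (hℓ : ∀ m, ℓ m = Real.log (1 - F (-m)) + Real.log (1 - F m)) :
    StrictConcaveOn ℝ Set.univ ℓ ∧
    Tendsto ℓ atTop atBot ∧ Tendsto ℓ atBot atBot ∧
    (∀ m : ℝ, m ≠ 0 → ℓ m < ℓ 0) := by
  -- integrability
  have hInt : Integrable f := by
    by_contra h
    rw [integral_undef h] at hint
    norm_num at hint
  have hsupp : Function.support f = Set.univ :=
    Set.eq_univ_of_forall fun x => (hpos x).ne'
  -- positivity of F
  have hFpos : ∀ x, 0 < F x := by
    intro x
    rw [hF]
    rw [setIntegral_pos_iff_support_of_nonneg_ae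
      (ae_of_all _ fun y => (hpos y).le) hInt.integrableOn]
    rw [hsupp, Set.univ_inter, Real.volume_Iic]
    exact ENNReal.zero_lt_top
  -- F x < 1
  have hcompl : ∀ x, F x + ∫ y in Set.Ioi x, f y = 1 := by
    intro x
    rw [hF, ← hint]
    have := MeasureTheory.integral_add_compl (measurableSet_Iic (a := x)) hInt
    rwa [Set.compl_Iic] at this
  have hFlt1 : ∀ x, F x < 1 := by
    intro x
    have hpos' : 0 < ∫ y in Set.Ioi x, f y := by
      rw [setIntegral_pos_iff_support_of_nonneg_ae
        (ae_of_all _ fun y => (hpos y).le) hInt.integrableOn]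
      rw [hsupp, Set.univ_inter, Real.volume_Ioi]
      exact ENNReal.zero_lt_top
    have := hcompl x
    linarith
  -- symmetry: F (-x) = 1 - F x
  have hFneg : ∀ x, F (-x) = 1 - F x := by
    intro x
    have h2 : F (-x) = ∫ y in Set.Iic (-x), f (-y) := by
      rw [hF]
      exact MeasureTheory.setIntegral_congr_fun measurableSet_Iic fun y _ => (hsymm y).symm
    have h1 : (∫ y in Set.Iic (-x), f (-y)) = ∫ y in Set.Ioi x, f y := by
      rw [integral_comp_neg_Iic, neg_neg]
    have h3 := hcompl x
    rw [h2, h1]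
    linarith
  -- translation of set integrals
  have shift : ∀ x δ : ℝ, (∫ u in Set.Iic x, f (u + δ)) = F (x + δ) := by
    intro x δ
    rw [hF, ← MeasureTheory.integral_indicator measurableSet_Iic,
      ← MeasureTheory.integral_indicator measurableSet_Iic,
      ← integral_add_right_eq_self (fun v => (Set.Iic (x + δ)).indicator f v) δ]
    congr 1
    ext u
    by_cases h : u ≤ x
    · rw [Set.indicator_of_mem (by simp only [Set.mem_Iic]; exact h),
        Set.indicator_of_mem (by simp only [Set.mem_Iic]; linarith)]
    · have h' : x < u := lt_of_not_ge h
      rw [Set.indicator_of_notMem (by simp only [Set.mem_Iic, not_le]; exact h'),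
        Set.indicator_of_notMem (by simp only [Set.mem_Iic, not_le]; linarith)]
  have hIntShift : ∀ δ : ℝ, Integrable (fun u => f (u + δ)) := by
    intro δ
    have := ((measurePreserving_add_right volume δ).integrable_comp
      hInt.aestronglyMeasurable).2 hInt
    exact this
  -- key ratio inequality: x < y → f y * F x < f x * F y
  have hRatio : ∀ x y : ℝ, x < y → f y * F x < f x * F y := by
    intro x y hxy
    set δ : ℝ := y - x with hδdef
    have hδ : 0 < δ := by simp [hδdef]; linarith
    have hxδ : x + δ = y := by simp [hδdef]
    have hFy : F y = ∫ u in Set.Iic x, f (u + δ) := by rw [shift, hxδ]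
    have hIs : IntegrableOn (fun u => f x * f (u + δ)) (Set.Iic x) volume :=
      ((hIntShift δ).const_mul (f x)).integrableOn
    have hI1 : IntegrableOn (fun u => f y * f u) (Set.Iic x) volume :=
      (hInt.const_mul (f y)).integrableOn
    have hIsub : IntegrableOn (fun u => f x * f (u + δ) - f y * f u) (Set.Iic x) volume := by
      exact hIs.sub hI1
    have key : 0 < ∫ u in Set.Iic x, (f x * f (u + δ) - f y * f u) := by
      rw [setIntegral_pos_iff_support_of_nonneg_ae ?_ hIsub]
      · refine lt_of_lt_of_le ?_ (measure_mono (?_ : Set.Iio x ⊆ _))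
        · rw [Real.volume_Iio]; exact ENNReal.zero_lt_top
        · intro u hu
          have hu' : u < x := hu
          have h4 := fourpoint_of_strict_logconcave hpos hlc hu' hδ
          rw [hxδ] at h4
          refine ⟨?_, hu'.le⟩
          simp only [Function.mem_support]
          intro hc
          nlinarith
      · refine (ae_restrict_iff' measurableSet_Iic).2 (ae_of_all _ fun u hu => ?_)
        rcases (Set.mem_Iic.mp hu).lt_or_eq with h | h
        · have h4 := fourpoint_of_strict_logconcave hpos hlc h hδ
          rw [hxδ] at h4
          simp only [Pi.zero_apply]
          nlinarith
        · subst h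
          simp only [Pi.zero_apply, hxδ]
          nlinarith [hpos u, hpos y]
    rw [MeasureTheory.integral_sub hIs hI1, MeasureTheory.integral_const_mul,
      MeasureTheory.integral_const_mul, ← hFy, ← hF x] at key
    linarith
  -- derivative of F
  have hFeq : F = fun x => F 0 + ∫ t in (0 : ℝ)..x, f t := by
    funext x
    have := intervalIntegral.integral_Iic_sub_Iic hInt.integrableOn hInt.integrableOn
      (a := 0) (b := x)
    rw [hF x, hF 0] at *
    linarith
  have hFderiv : ∀ x, HasDerivAt F (f x) x := by
    intro x
    rw [hFeq]
    have h := intervalIntegral.integral_hasDerivAt_right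
      (hInt.intervalIntegrable (a := 0) (b := x))
      (hcont.stronglyMeasurableAtFilter _ _) hcont.continuousAt
    exact h.const_add (F 0)
  -- strict concavity of log ∘ F
  have hgderiv : ∀ x, HasDerivAt (fun m => Real.log (F m)) (f x / F x) x :=
    fun x => (hFderiv x).log (hFpos x).ne'
  have hganti : StrictAnti (fun x => f x / F x) := by
    intro x y hxy
    rw [div_lt_div_iff₀ (hFpos y) (hFpos x)]
    exact hRatio x y hxy
  have hgcc : StrictConcaveOn ℝ Set.univ (fun m => Real.log (F m)) := by
    refine StrictAnti.strictConcaveOn_univ_of_deriv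
      (continuous_iff_continuousAt.2 fun x => (hgderiv x).continuousAt) ?_
    have hd : deriv (fun m => Real.log (F m)) = fun x => f x / F x :=
      funext fun x => (hgderiv x).deriv
    rw [hd]
    exact hganti
  have hgneg : StrictConcaveOn ℝ Set.univ (fun m => Real.log (F (-m))) := by
    refine ⟨convex_univ, fun x _ y _ hxy a b ha hb hab => ?_⟩
    have hxy' : -x ≠ -y := fun h => hxy (neg_injective h)
    have := hgcc.2 (Set.mem_univ (-x)) (Set.mem_univ (-y)) hxy' ha hb hab
    show a • Real.log (F (-x)) + b • Real.log (F (-y)) < Real.log (F (-(a • x + b • y)))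
    rw [show -(a • x + b • y) = a • (-x) + b • (-y) by simp [smul_eq_mul]; ring]
    exact this
  have hleq : ∀ m, ℓ m = Real.log (F m) + Real.log (F (-m)) := by
    intro m
    have h1 : 1 - F (-m) = F m := by rw [hFneg m]; ring
    have h2 : 1 - F m = F (-m) := (hFneg m).symm
    rw [hℓ m, h1, h2]
  have hlcc : StrictConcaveOn ℝ Set.univ ℓ := by
    have : ℓ = fun m => Real.log (F m) + Real.log (F (-m)) := funext hleq
    rw [this]
    exact hgcc.add hgneg
  -- limits
  have hFtop : Tendsto F atTop (𝓝 1) := by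
    have h := (MeasureTheory.aecover_Iic
      (tendsto_id : Tendsto (id : ℝ → ℝ) atTop atTop)).integral_tendsto_of_countably_generated
      (μ := volume) hInt
    rw [hint] at h
    exact h.congr fun x => (hF x).symm
  have hFnegtop : Tendsto (fun m => F (-m)) atTop (𝓝 0) := by
    have : Tendsto (fun m => 1 - F m) atTop (𝓝 (1 - 1)) :=
      tendsto_const_nhds.sub hFtop
    rw [sub_self] at this
    exact this.congr fun m => (hFneg m).symm
  have hlogtop : Tendsto (fun m => Real.log (F (-m))) atTop atBot := by
    refine Real.tendsto_log_nhdsGT_zero.comp ?_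
    exact tendsto_nhdsWithin_of_tendsto_nhds_of_eventually_within _ hFnegtop
      (Eventually.of_forall fun m => hFpos (-m))
  have hTop : Tendsto ℓ atTop atBot := by
    refine tendsto_atBot_mono (fun m => ?_) hlogtop
    rw [hleq m]
    have : Real.log (F m) ≤ 0 := Real.log_nonpos (hFpos m).le (hFlt1 m).le
    linarith
  have hsymmℓ : ∀ m, ℓ (-m) = ℓ m := by
    intro m
    rw [hℓ, hℓ, neg_neg, add_comm]
  have hBot : Tendsto ℓ atBot atBot := by
    have h := hTop.comp (tendsto_neg_atBot_atTop : Tendsto (fun m : ℝ => -m) atBot atTop)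
    exact h.congr fun m => hsymmℓ m
  -- unique maximum at 0
  refine ⟨hlcc, hTop, hBot, fun m hm => ?_⟩
  have hne : m ≠ -m := fun h => hm (by linarith [h.symm.le, h.le])
  have h := hlcc.2 (Set.mem_univ m) (Set.mem_univ (-m)) hne
    (by norm_num : (0 : ℝ) < 1 / 2) (by norm_num : (0 : ℝ) < 1 / 2) (by norm_num)
  have he : (1 / 2 : ℝ) • m + (1 / 2 : ℝ) • (-m) = 0 := by
    simp [smul_eq_mul]
  rw [he] at h
  simp only [smul_eq_mul] at h
  rw [hsymmℓ m] at h
  linarith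
end
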